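/- Let R be a commutative ring, k ≥ 2, x₁, x₂ ∈ R, and let A, B, C be (k+1)×k matrices over R satisfying A·F_{k−1}(0,1) = B·F_{k−1}(1,0), A·F_{k−1}(x₁,x₂) = C·F_{k−1}(1,0), and B·F_{k−1}(x₁,x₂) = C·F_{k−1}(0,1). Then: (i) B_{u,v} = A_{u,v+1} for all rows u and all 1 ≤ v ≤ k−1; (ii) C_{u,v} = x₁·A_{u,v} + x₂·A_{u,v+1} for all rows u and all 1 ≤ v ≤ k−1; and (iii) C_{u,k} = x₁·A_{u,k} + x₂·B_{u,k} for all rows u. (This is Step 1 of the induction step in the proof of Theorem 4.2, equations (4.4)–(4.5): the commutation relations among consecutive f-type matrices determine the matrix F₃^{(n−2)} from F₁^{(n−2)} and F₂^{(n−2)}.) -/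
import Mathlib


/-- The `(k+1) × k` matrix `F_k(a,b)` of equation (4.1): (1-indexed) entry `(i,j)` is
`a` if `i = j`, `b` if `i = j+1`, and `0` otherwise. -/
def Fmat (R : Type*) [CommRing R] (k : ℕ) (a b : R) : Matrix (Fin (k + 1)) (Fin k) R :=
  Matrix.of fun i j =>
    if (i : ℕ) = (j : ℕ) then a else if (i : ℕ) = (j : ℕ) + 1 then b else 0

lemma mul_Fmat_apply {R : Type*} [CommRing R] (k : ℕ) (hk : 1 ≤ k) (a b : R)
    (D : Matrix (Fin (k + 1)) (Fin k) R) (u : Fin (k + 1)) (j : ℕ) (hj : j < k - 1) :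
    (D * (Fmat R (k - 1) a b).submatrix (Fin.cast (by omega : k = k - 1 + 1)) id) u
      ⟨j, hj⟩ = a * D u ⟨j, by omega⟩ + b * D u ⟨j + 1, by omega⟩ := by
  rw [Matrix.mul_apply]
  rw [Fintype.sum_eq_add (⟨j, by omega⟩ : Fin k) (⟨j + 1, by omega⟩ : Fin k)
    (by simp [Fin.ext_iff]) ?_]
  · simp [Fmat, Fin.ext_iff, mul_comm]
  · rintro c ⟨hc1, hc2⟩
    simp only [Fmat, Matrix.submatrix_apply, Matrix.of_apply, Fin.coe_cast, id_eq]
    rw [if_neg, if_neg, mul_zero]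
    · intro h; exact hc2 (by simpa [Fin.ext_iff] using h)
    · intro h; exact hc1 (by simpa [Fin.ext_iff] using h)

/-- Step 1 of the induction step in the proof of Theorem 4.2 (equations (4.4)–(4.5)):
if `(k+1) × k` matrices `A`, `B`, `C` satisfy `A·F_{k−1}(0,1) = B·F_{k−1}(1,0)`,
`A·F_{k−1}(x₁,x₂) = C·F_{k−1}(1,0)` and `B·F_{k−1}(x₁,x₂) = C·F_{k−1}(0,1)`, then
(i) `B_{u,v} = A_{u,v+1}` for `1 ≤ v ≤ k−1`, (ii) `C_{u,v} = x₁·A_{u,v} + x₂·A_{u,v+1}`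
for `1 ≤ v ≤ k−1`, and (iii) `C_{u,k} = x₁·A_{u,k} + x₂·B_{u,k}` (1-indexed columns). -/
theorem stmt7 {R : Type*} [CommRing R] (k : ℕ) (hk : 2 ≤ k) (x₁ x₂ : R)
    (A B C : Matrix (Fin (k + 1)) (Fin k) R)
    (h1 : A * (Fmat R (k - 1) (0 : R) 1).submatrix (Fin.cast (by omega : k = k - 1 + 1)) id =
          B * (Fmat R (k - 1) (1 : R) 0).submatrix (Fin.cast (by omega : k = k - 1 + 1)) id)
    (h2 : A * (Fmat R (k - 1) x₁ x₂).submatrix (Fin.cast (by omega : k = k - 1 + 1)) id =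
          C * (Fmat R (k - 1) (1 : R) 0).submatrix (Fin.cast (by omega : k = k - 1 + 1)) id)
    (h3 : B * (Fmat R (k - 1) x₁ x₂).submatrix (Fin.cast (by omega : k = k - 1 + 1)) id =
          C * (Fmat R (k - 1) (0 : R) 1).submatrix (Fin.cast (by omega : k = k - 1 + 1)) id) :
    (∀ (u : Fin (k + 1)) (v : ℕ) (hv : v < k - 1),
      B u ⟨v, by omega⟩ = A u ⟨v + 1, by omega⟩) ∧
    (∀ (u : Fin (k + 1)) (v : ℕ) (hv : v < k - 1),
      C u ⟨v, by omega⟩ = x₁ * A u ⟨v, by omega⟩ + x₂ * A u ⟨v + 1, by omega⟩) ∧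
    (∀ u : Fin (k + 1),
      C u ⟨k - 1, by omega⟩ = x₁ * A u ⟨k - 1, by omega⟩ + x₂ * B u ⟨k - 1, by omega⟩) := by
  have hBA : ∀ (u : Fin (k + 1)) (v : ℕ) (hv : v < k - 1),
      B u ⟨v, by omega⟩ = A u ⟨v + 1, by omega⟩ := by
    intro u v hv
    have e := congrFun (congrFun h1 u) ⟨v, hv⟩
    rw [mul_Fmat_apply k (by omega), mul_Fmat_apply k (by omega)] at e
    linear_combination -e
  have hCA : ∀ (u : Fin (k + 1)) (v : ℕ) (hv : v < k - 1),
      C u ⟨v, by omega⟩ = x₁ * A u ⟨v, by omega⟩ + x₂ * A u ⟨v + 1, by omega⟩ := by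
    intro u v hv
    have e := congrFun (congrFun h2 u) ⟨v, hv⟩
    rw [mul_Fmat_apply k (by omega), mul_Fmat_apply k (by omega)] at e
    linear_combination -e
  refine ⟨hBA, hCA, fun u => ?_⟩
  have e := congrFun (congrFun h3 u) ⟨k - 2, by omega⟩
  rw [mul_Fmat_apply k (by omega), mul_Fmat_apply k (by omega)] at e
  have h21 : (⟨k - 2 + 1, by omega⟩ : Fin k) = ⟨k - 1, by omega⟩ := by
    simp [Fin.ext_iff]; omega
  rw [h21] at e
  have := hBA u (k - 2) (by omega)
  rw [h21] at this
  linear_combination -e + x₁ * this
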